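/- Let a > c and b > d (dominant-strategy game with action 1 dominant). Let φ : ℝ → ℝ be continuously differentiable with φ(x) > 0 for all x ∈ (0,1], such that there exist constants h > 0 and k > 0 with φ(x)/x^h → k as x → 0⁺, and such that there exists ε* > 0 with φ(x) > a − c for all x ∈ [1−ε*, 1]. Then every solution (x, g) of the conformity-gain controlled replicator equation with x(0) ∈ [0,1) and g(0) > 0 satisfies x(t) → 0 as t → ∞ and g(t) → ḡ as t → ∞ for some constant ḡ > 0. -/

import Mathlib

open Filter Set Topology Real

/-!
Along a solution, `x` stays in `[0, 1)` and `log g` is a primitive of `φ ∘ x ≥ 0`, so `g`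
increases; the point is that `g` stays bounded. While `x ≥ θ` with `θ` close to `1`,
`log (g (1 - x))` grows at rate at least `φ(x) - x Δ(x) > 0`, where `Δ` is the payoff advantage
and `φ(1) > Δ(1) = a - c`; then `g (1 - x) → ∞`, which forces `log (1 - x) → ∞`, absurd. So if
`g` were unbounded, `x` would drop below `θ` at a time when `(1 - θ) g` already dominates `Δ`;
from then on `x` is trapped below `θ` and decays exponentially, and `φ(x) = O(x^h)` keeps
`∫ φ(x) = log g` bounded after all. Hence `g` converges and `∫ φ(x) < ∞`; since the velocity of
`x` is bounded and `φ > 0` on `(0, 1]`, this forces `x → 0`, as in Barbălat's lemma.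
-/

/-- `(x, g)` is a solution of the conformity-gain controlled replicator equation
(control matrix `G⁽⁴⁾`): `ẋ = x(1−x)((a+d−b−c)x + b − d − g(1−x))`, `ġ = φ(x) g`. -/
def IsConformitySolution (a b c d : ℝ) (φ : ℝ → ℝ) (x g : ℝ → ℝ) : Prop :=
  ∀ t : ℝ, 0 ≤ t →
    HasDerivAt x
      (x t * (1 - x t) * ((a + d - b - c) * x t + (b - d) - g t * (1 - x t))) t ∧
    HasDerivAt g (φ (x t) * g t) t

theorem sub_le_sub_of_hasDerivAt_le {f g f' g' : ℝ → ℝ} {a b : ℝ} (hab : a ≤ b)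
    (hf : ∀ t ∈ Icc a b, HasDerivAt f (f' t) t) (hg : ∀ t ∈ Icc a b, HasDerivAt g (g' t) t)
    (hle : ∀ t ∈ Icc a b, f' t ≤ g' t) : f b - f a ≤ g b - g a := by
  have hmono : MonotoneOn (fun t => g t - f t) (Icc a b) :=
    monotoneOn_of_hasDerivWithinAt_nonneg (convex_Icc a b)
      (fun t ht => ((hg t ht).sub (hf t ht)).continuousAt.continuousWithinAt)
      (fun t ht => ((hg t (interior_subset ht)).sub (hf t (interior_subset ht))).hasDerivWithinAt)
      (fun t ht => sub_nonneg.2 (hle t (interior_subset ht)))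
  have := hmono (left_mem_Icc.2 hab) (right_mem_Icc.2 hab) hab
  linarith

theorem monotoneOn_Ici_of_hasDerivAt_nonneg {f f' : ℝ → ℝ} {T : ℝ}
    (hf : ∀ t ≥ T, HasDerivAt f (f' t) t) (hf' : ∀ t ≥ T, 0 ≤ f' t) : MonotoneOn f (Ici T) :=
  fun s hs t _ hst => by
    have := sub_le_sub_of_hasDerivAt_le hst (fun _ _ => hasDerivAt_const _ (0 : ℝ))
      (fun r hr => hf r (hs.trans hr.1)) (fun r hr => hf' r (hs.trans hr.1))
    linarith

theorem MonotoneOn.exists_tendsto_of_le {f : ℝ → ℝ} {T B : ℝ} (hf : MonotoneOn f (Ici T))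
    (hB : ∀ t ≥ T, f t ≤ B) : ∃ l, Tendsto f atTop (𝓝 l) := by
  have hmono : Monotone fun t => f (max T t) := fun s t hst =>
    hf (le_max_left T s) (le_max_left T t) (max_le_max le_rfl hst)
  refine ⟨_, (tendsto_atTop_ciSup hmono ⟨B, ?_⟩).congr' ?_⟩
  · rintro _ ⟨t, rfl⟩
    exact hB _ (le_max_left T t)
  · filter_upwards [eventually_ge_atTop T] with t ht
    rw [max_eq_right ht]

theorem tendsto_atTop_of_le_hasDerivAt {f f' : ℝ → ℝ} {T c : ℝ} (hc : 0 < c)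
    (hf : ∀ t ≥ T, HasDerivAt f (f' t) t) (hf' : ∀ t ≥ T, c ≤ f' t) :
    Tendsto f atTop atTop := by
  have hlin : ∀ t ≥ T, f T + c * (t - T) ≤ f t := fun t ht => by
    have := sub_le_sub_of_hasDerivAt_le ht (fun s _ => (hasDerivAt_id' s).const_mul c)
      (fun s hs => hf s hs.1) (fun s hs => by simpa using hf' s hs.1)
    linarith
  refine tendsto_atTop_mono' atTop ((eventually_ge_atTop T).mono hlin) ?_
  exact tendsto_atTop_add_const_left _ _
    ((tendsto_atTop_add_const_right _ (-T) tendsto_id).const_mul_atTop hc)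

theorem le_mul_exp_of_hasDerivAt_le_mul {y y' : ℝ → ℝ} {T c : ℝ}
    (hy : ∀ t ≥ T, HasDerivAt y (y' t) t) (hle : ∀ t ≥ T, y' t ≤ c * y t) {t : ℝ} (ht : T ≤ t) :
    y t ≤ y T * exp (c * (t - T)) := by
  have hF : ∀ s ≥ T, HasDerivAt (fun s => y s * exp (-c * (s - T)))
      ((y' s - c * y s) * exp (-c * (s - T))) s := fun s hs => by
    have hlin : HasDerivAt (fun s => -c * (s - T)) (-c) s := by
      simpa using ((hasDerivAt_id' s).sub_const T).const_mul (-c)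
    exact ((hy s hs).mul hlin.exp).congr_deriv (by ring)
  have := sub_le_sub_of_hasDerivAt_le ht (fun s hs => hF s hs.1)
    (fun _ _ => hasDerivAt_const _ (0 : ℝ))
    (fun s hs => mul_nonpos_of_nonpos_of_nonneg (by linarith [hle s hs.1]) (exp_pos _).le)
  simp only [sub_self, mul_zero, exp_zero, mul_one, sub_nonpos] at this
  calc y t = y t * exp (-c * (t - T)) * exp (c * (t - T)) := by
        rw [mul_assoc, ← exp_add, neg_mul, neg_add_cancel, exp_zero, mul_one]
    _ ≤ y T * exp (c * (t - T)) := mul_le_mul_of_nonneg_right this (exp_pos _).le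

theorem le_add_div_of_hasDerivAt_le_mul_exp {f f' : ℝ → ℝ} {T C r : ℝ} (hC : 0 ≤ C) (hr : 0 < r)
    (hf : ∀ t ≥ T, HasDerivAt f (f' t) t) (hle : ∀ t ≥ T, f' t ≤ C * exp (-r * (t - T)))
    {t : ℝ} (ht : T ≤ t) : f t ≤ f T + C / r := by
  have hE : ∀ s, HasDerivAt (fun s => -(C / r) * exp (-r * (s - T)))
      (C * exp (-r * (s - T))) s := fun s => by
    have hlin : HasDerivAt (fun s => -r * (s - T)) (-r) s := by
      simpa using ((hasDerivAt_id' s).sub_const T).const_mul (-r)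
    exact (hlin.exp.const_mul (-(C / r))).congr_deriv (by field_simp)
  have := sub_le_sub_of_hasDerivAt_le ht (fun s hs => hf s hs.1) (fun s _ => hE s)
    (fun s hs => hle s hs.1)
  have hexp : 0 ≤ C / r * exp (-r * (t - T)) := by positivity
  simp only [sub_self, mul_zero, exp_zero, mul_one] at this
  linarith

theorem eq_mul_exp_integral_of_hasDerivAt {y ψ : ℝ → ℝ} (hψ : ContinuousOn ψ (Ici 0))
    (hy : ∀ t ≥ 0, HasDerivAt y (ψ t * y t) t) {t : ℝ} (ht : 0 ≤ t) :
    y t = y 0 * exp (∫ s in (0 : ℝ)..t, ψ s) := by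
  -- `ψ` is only continuous on `[0, ∞)`; integrate its continuous extension `ψ ∘ max 0`.
  set Ψ : ℝ → ℝ := fun s => ∫ r in (0 : ℝ)..s, ψ (max 0 r)
  have hΨ : ∀ s, HasDerivAt Ψ (ψ (max 0 s)) s := fun s =>
    ((hψ.comp_continuous (continuous_const.max continuous_id) fun r => le_max_left 0 r)
      |>.integral_hasStrictDerivAt 0 s).hasDerivAt
  have hF : ∀ s ≥ 0, HasDerivAt (fun s => y s * exp (-Ψ s)) 0 s := fun s hs =>
    ((hy s hs).mul (hΨ s).neg.exp).congr_deriv (by rw [max_eq_right hs]; ring)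
  have hconst := constant_of_has_deriv_right_zero
    (fun s hs => (hF s hs.1).continuousAt.continuousWithinAt)
    (fun s hs => (hF s hs.1).hasDerivWithinAt) t ⟨ht, le_rfl⟩
  have hint : ∫ s in (0 : ℝ)..t, ψ s = Ψ t := intervalIntegral.integral_congr fun s hs => by
    rw [uIcc_of_le ht] at hs
    simp only [max_eq_right hs.1]
  simp only [Ψ, intervalIntegral.integral_same, neg_zero, exp_zero, mul_one] at hconst
  rw [hint, ← hconst, mul_assoc, ← exp_add, neg_add_cancel, exp_zero, mul_one]

theorem tendsto_nhds_zero_of_tendsto_primitive {φ x G : ℝ → ℝ} {l : ℝ}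
    (hφ : ContinuousOn φ (Ioc 0 1)) (hφpos : ∀ y ∈ Ioc 0 1, 0 < φ y)
    (hx : ∀ t ≥ 0, x t ∈ Icc 0 1) (hxu : UniformContinuousOn x (Ici 0))
    (hG : ∀ t ≥ 0, HasDerivAt G (φ (x t)) t) (hGl : Tendsto G atTop (𝓝 l)) :
    Tendsto x atTop (𝓝 0) := by
  rw [Metric.tendsto_atTop]
  intro ε hε
  by_contra! hfreq
  simp only [Real.dist_0_eq_abs] at hfreq
  obtain ⟨δ, hδ, hxδ⟩ := Metric.uniformContinuousOn_iff.1 hxu (ε / 2) (half_pos hε)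
  obtain ⟨m, hm, hφm⟩ := isCompact_Icc.exists_forall_le'
    (hφ.mono (Icc_subset_Ioc (half_pos hε) le_rfl)) fun y hy => hφpos y ⟨by linarith [hy.1], hy.2⟩
  have hinc : Tendsto (fun t => G t - G (t - δ / 2)) atTop (𝓝 0) := by
    simpa [sub_eq_add_neg] using
      hGl.sub (hGl.comp (tendsto_atTop_add_const_right _ (-(δ / 2)) tendsto_id))
  obtain ⟨N, hN⟩ := eventually_atTop.1 (hinc.eventually (gt_mem_nhds (mul_pos hm (half_pos hδ))))
  obtain ⟨t, ht, hxt⟩ := hfreq (max N (δ / 2))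
  have ht0 : 0 ≤ t := (half_pos hδ).le.trans (le_of_max_le_right ht)
  rw [abs_of_nonneg (hx t ht0).1] at hxt
  have hwin : ∀ s ∈ Icc (t - δ / 2) t, 0 ≤ s ∧ m ≤ φ (x s) := fun s hs => by
    have hs0 : 0 ≤ s := by linarith [hs.1, le_max_right N (δ / 2)]
    have hts := hxδ t ht0 s hs0 <| by
      rw [Real.dist_eq, abs_lt]; constructor <;> linarith [hs.1, hs.2]
    rw [Real.dist_eq, abs_lt] at hts
    exact ⟨hs0, hφm _ ⟨by linarith, (hx s hs0).2⟩⟩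
  have := sub_le_sub_of_hasDerivAt_le (by linarith : t - δ / 2 ≤ t)
    (fun s _ => (hasDerivAt_id' s).const_mul m) (fun s hs => hG s (hwin s hs).1)
    (fun s hs => by simpa using (hwin s hs).2)
  linarith [hN t (le_of_max_le_left ht)]

theorem eq_zero_of_tendsto_div_rpow {φ : ℝ → ℝ} {h k : ℝ} (hφ : ContinuousWithinAt φ (Ioi 0) 0)
    (hh : 0 < h) (hlim : Tendsto (fun y => φ y / y ^ h) (𝓝[>] 0) (𝓝 k)) : φ 0 = 0 := by
  have hpow : Tendsto (fun y : ℝ => y ^ h) (𝓝[>] 0) (𝓝 0) := by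
    simpa [zero_rpow hh.ne'] using
      ((continuousAt_rpow_const 0 h (Or.inr hh.le)).continuousWithinAt (s := Ioi 0)).tendsto
  have : Tendsto φ (𝓝[>] 0) (𝓝 (k * 0)) := (hlim.mul hpow).congr' <|
    eventually_nhdsWithin_of_forall fun y hy => div_mul_cancel₀ _ (rpow_pos_of_pos hy h).ne'
  exact tendsto_nhds_unique hφ.tendsto (by simpa using this)

theorem exists_le_mul_rpow_of_tendsto_div_rpow {φ : ℝ → ℝ} {h k : ℝ}
    (hφ : ContinuousOn φ (Ioc 0 1)) (h0 : φ 0 = 0)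
    (hlim : Tendsto (fun y => φ y / y ^ h) (𝓝[>] 0) (𝓝 k)) :
    ∃ C ≥ 0, ∀ y ∈ Icc 0 1, φ y ≤ C * y ^ h := by
  obtain ⟨η, hη, hnear⟩ :=
    mem_nhdsGT_iff_exists_Ioo_subset.1 (hlim.eventually (gt_mem_nhds (lt_add_one k)))
  have hη₁ : 0 < min η 1 := lt_min hη one_pos
  obtain ⟨C₁, hC₁⟩ := isCompact_Icc.bddAbove_image (f := fun y => φ y / y ^ h) <|
    (hφ.mono (Icc_subset_Ioc hη₁ le_rfl)).div
      (continuousOn_id.rpow_const fun y hy => Or.inl (hη₁.trans_le hy.1).ne')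
      fun y hy => (rpow_pos_of_pos (hη₁.trans_le hy.1) h).ne'
  refine ⟨max (max (k + 1) C₁) 0, le_max_right _ _, fun y hy => ?_⟩
  rcases hy.1.eq_or_lt with rfl | hy0
  · rw [h0]
    positivity
  rw [← div_le_iff₀ (rpow_pos_of_pos hy0 h)]
  refine le_trans ?_ (le_max_left _ _)
  rcases lt_or_ge y (min η 1) with hyη | hyη
  · exact (hnear ⟨hy0, hyη.trans_le (min_le_left _ _)⟩).le.trans (le_max_left _ _)
  · exact (hC₁ ⟨y, ⟨hyη, hy.2⟩, rfl⟩).trans (le_max_right _ _)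

theorem exists_mem_Ioo_forall_Icc_lt_of_continuousAt {f : ℝ → ℝ} {p q r : ℝ}
    (hf : ContinuousAt f p) (hq : q < p) (hr : r < f p) :
    ∃ θ ∈ Ioo q p, ∀ y ∈ Icc θ p, r < f y := by
  obtain ⟨l, hl, hsub⟩ := mem_nhdsLE_iff_exists_Icc_subset.1
    (nhdsWithin_le_nhds (hf.eventually (lt_mem_nhds hr)))
  obtain ⟨θ, hθ⟩ := exists_between (max_lt hl hq)
  exact ⟨θ, ⟨(le_max_right _ _).trans_lt hθ.1, hθ.2⟩,
    fun y hy => hsub ⟨(le_max_left l q).trans (hθ.1.le.trans hy.1), hy.2⟩⟩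

/-- `(a y + b (1 - y)) - (c y + d (1 - y))`: the payoff advantage of action 1 over action 2
when action 1 is played with frequency `y`. -/
def payoffAdvantage (a b c d y : ℝ) : ℝ := (a + d - b - c) * y + (b - d)

theorem payoffAdvantage_one (a b c d : ℝ) : payoffAdvantage a b c d 1 = a - c := by
  unfold payoffAdvantage
  ring

theorem abs_payoffAdvantage_le (a b c d : ℝ) :
    ∀ y ∈ Icc (0 : ℝ) 1, |payoffAdvantage a b c d y| ≤ |a - c| + |b - d| := by
  intro y hy
  have hy' : 0 ≤ 1 - y := sub_nonneg.2 hy.2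
  calc |payoffAdvantage a b c d y| = |y * (a - c) + (1 - y) * (b - d)| := by
        unfold payoffAdvantage; ring_nf
    _ ≤ y * |a - c| + (1 - y) * |b - d| := by
        refine (abs_add_le _ _).trans_eq ?_
        rw [abs_mul, abs_mul, abs_of_nonneg hy.1, abs_of_nonneg hy']
    _ ≤ |a - c| + |b - d| := by
        nlinarith [mul_nonneg hy' (abs_nonneg (a - c)), mul_nonneg hy.1 (abs_nonneg (b - d))]

namespace IsConformitySolution

variable {a b c d : ℝ} {φ x g : ℝ → ℝ}

theorem hasDerivAt_x (hsol : IsConformitySolution a b c d φ x g) {t : ℝ} (ht : 0 ≤ t) :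
    HasDerivAt x (x t * (1 - x t) * (payoffAdvantage a b c d (x t) - g t * (1 - x t))) t :=
  (hsol t ht).1

theorem continuousOn_x (hsol : IsConformitySolution a b c d φ x g) : ContinuousOn x (Ici 0) :=
  fun t ht => (hsol t ht).1.continuousAt.continuousWithinAt

theorem continuousOn_g (hsol : IsConformitySolution a b c d φ x g) : ContinuousOn g (Ici 0) :=
  fun t ht => (hsol t ht).2.continuousAt.continuousWithinAt

theorem mem_Ico (hsol : IsConformitySolution a b c d φ x g) (hx0 : x 0 ∈ Ico 0 1) {t : ℝ}
    (ht : 0 ≤ t) : x t ∈ Ico 0 1 := by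
  have hx := hsol.continuousOn_x
  have hg := hsol.continuousOn_g
  set v : ℝ → ℝ := fun s => payoffAdvantage a b c d (x s) - g s * (1 - x s)
  have hv : ContinuousOn v (Ici 0) := by
    unfold v payoffAdvantage
    fun_prop
  constructor
  · rw [eq_mul_exp_integral_of_hasDerivAt (ψ := fun s => (1 - x s) * v s)
      ((continuousOn_const.sub hx).mul hv)
      (fun s hs => (hsol.hasDerivAt_x hs).congr_deriv (by ring)) ht]
    exact mul_nonneg hx0.1 (exp_pos _).le
  · have hrep := eq_mul_exp_integral_of_hasDerivAt (y := fun s => 1 - x s)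
      (ψ := fun s => -x s * v s) (hx.neg.mul hv)
      (fun s hs => ((hsol.hasDerivAt_x hs).const_sub 1).congr_deriv (by ring)) ht
    have : 0 < 1 - x t := by
      rw [hrep]
      exact mul_pos (sub_pos.2 hx0.2) (exp_pos _)
    linarith

theorem g_pos (hsol : IsConformitySolution a b c d φ x g) (hφ : Continuous φ) (hg0 : 0 < g 0)
    {t : ℝ} (ht : 0 ≤ t) : 0 < g t := by
  rw [eq_mul_exp_integral_of_hasDerivAt (hφ.comp_continuousOn hsol.continuousOn_x)
    (fun s hs => (hsol s hs).2) ht]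
  positivity

theorem hasDerivAt_log_g (hsol : IsConformitySolution a b c d φ x g) {t : ℝ} (ht : 0 ≤ t)
    (hg : 0 < g t) : HasDerivAt (fun s => log (g s)) (φ (x t)) t :=
  ((hsol t ht).2.log hg.ne').congr_deriv (by field_simp)

theorem hasDerivAt_log_one_sub_x (hsol : IsConformitySolution a b c d φ x g) {t : ℝ}
    (ht : 0 ≤ t) (hx : x t < 1) :
    HasDerivAt (fun s => log (1 - x s))
      (x t * (g t * (1 - x t) - payoffAdvantage a b c d (x t))) t :=
  (((hsol.hasDerivAt_x ht).const_sub 1).log (sub_pos.2 hx).ne').congr_deriv (by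
    have := (sub_pos.2 hx).ne'
    field_simp
    ring)

theorem monotoneOn_log_g (hsol : IsConformitySolution a b c d φ x g)
    (hx : ∀ t ≥ 0, x t ∈ Ico 0 1) (hg : ∀ t ≥ 0, 0 < g t) (hφ : ∀ y ∈ Icc 0 1, 0 ≤ φ y) :
    MonotoneOn (fun t => log (g t)) (Ici 0) :=
  monotoneOn_Ici_of_hasDerivAt_nonneg (fun t ht => hsol.hasDerivAt_log_g ht (hg t ht))
    fun t ht => hφ _ (Ico_subset_Icc_self (hx t ht))

theorem frequently_x_lt (hsol : IsConformitySolution a b c d φ x g)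
    (hx : ∀ t ≥ 0, x t ∈ Ico 0 1) (hg : ∀ t ≥ 0, 0 < g t) {K θ δ : ℝ}
    (hK : ∀ y ∈ Icc 0 1, payoffAdvantage a b c d y ≤ K) (hθ : 0 < θ) (hδ : 0 < δ)
    (hζ : ∀ y ∈ Icc θ 1, δ ≤ φ y - y * payoffAdvantage a b c d y) :
    ∃ᶠ t in atTop, x t < θ := by
  by_contra hnot
  obtain ⟨T, hT⟩ := eventually_atTop.1 (not_frequently.1 hnot)
  have hnear : ∀ t ≥ max T 0, 0 ≤ t ∧ θ ≤ x t ∧ x t < 1 := fun t ht =>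
    have ht0 := le_of_max_le_right ht
    ⟨ht0, not_lt.1 (hT t (le_of_max_le_left ht)), (hx t ht0).2⟩
  have hL : Tendsto (fun t => log (g t) + log (1 - x t)) atTop atTop := by
    refine tendsto_atTop_of_le_hasDerivAt hδ (fun t ht => (hsol.hasDerivAt_log_g (hnear t ht).1
      (hg t (hnear t ht).1)).add (hsol.hasDerivAt_log_one_sub_x (hnear t ht).1 (hnear t ht).2.2))
      fun t ht => ?_
    obtain ⟨ht0, hθx, hx1⟩ := hnear t ht
    have := hζ (x t) ⟨hθx, hx1.le⟩
    have : 0 ≤ x t * (g t * (1 - x t)) :=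
      mul_nonneg (hθ.le.trans hθx) (mul_nonneg (hg t ht0).le (sub_nonneg.2 hx1.le))
    linarith
  obtain ⟨T₁, hT₁⟩ := eventually_atTop.1 ((tendsto_exp_atTop.comp hL).eventually_ge_atTop (K + 1))
  have hM : Tendsto (fun t => log (1 - x t)) atTop atTop := by
    refine tendsto_atTop_of_le_hasDerivAt (T := max T₁ (max T 0)) hθ
      (fun t ht => hsol.hasDerivAt_log_one_sub_x (hnear t (le_of_max_le_right ht)).1
        (hnear t (le_of_max_le_right ht)).2.2) fun t ht => ?_
    obtain ⟨ht0, hθx, hx1⟩ := hnear t (le_of_max_le_right ht)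
    have hbig := hT₁ t (le_of_max_le_left ht)
    simp only [Function.comp, exp_add, exp_log (hg t ht0), exp_log (sub_pos.2 hx1)] at hbig
    have := hK (x t) ⟨hθ.le.trans hθx, hx1.le⟩
    nlinarith
  obtain ⟨t, hpos, ht0⟩ := ((hM.eventually_gt_atTop 0).and (eventually_ge_atTop 0)).exists
  have := log_nonpos (sub_nonneg.2 (hx t ht0).2.le) (by linarith [(hx t ht0).1])
  linarith

theorem x_le_of_x_le (hsol : IsConformitySolution a b c d φ x g) (hx : ∀ t ≥ 0, x t ∈ Ico 0 1)
    {K θ t₁ : ℝ} (hK : ∀ y ∈ Icc 0 1, payoffAdvantage a b c d y ≤ K) (hθ : 0 < θ)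
    (ht₁ : 0 ≤ t₁) (hxt₁ : x t₁ ≤ θ) (hbig : ∀ t ≥ t₁, K < (1 - θ) * g t) {t : ℝ}
    (ht : t₁ ≤ t) : x t ≤ θ :=
  image_le_of_deriv_right_lt_deriv_boundary' (B := fun _ => θ) (B' := fun _ => 0)
    (fun s hs => (hsol.hasDerivAt_x (ht₁.trans hs.1)).continuousAt.continuousWithinAt)
    (fun s hs => (hsol.hasDerivAt_x (ht₁.trans hs.1)).hasDerivWithinAt) hxt₁ continuousOn_const
    (fun s _ => hasDerivWithinAt_const _ _ _) (fun s hs hxs => by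
      have hθ1 : θ < 1 := hxs ▸ (hx s (ht₁.trans hs.1)).2
      rw [hxs]
      refine mul_neg_of_pos_of_neg (mul_pos hθ (sub_pos.2 hθ1)) ?_
      linarith [hK θ ⟨hθ.le, hθ1.le⟩, hbig s hs.1])
    ⟨ht, le_rfl⟩

theorem log_g_le_of_forall_x_le (hsol : IsConformitySolution a b c d φ x g)
    (hx : ∀ t ≥ 0, x t ∈ Ico 0 1) (hg : ∀ t ≥ 0, 0 < g t) {K C h θ t₁ : ℝ}
    (hK : ∀ y ∈ Icc 0 1, payoffAdvantage a b c d y ≤ K) (hC : 0 ≤ C) (hh : 0 < h)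
    (hφ : ∀ y ∈ Icc 0 1, φ y ≤ C * y ^ h) (hθ : θ < 1) (ht₁ : 0 ≤ t₁)
    (hxθ : ∀ t ≥ t₁, x t ≤ θ) (hbig : ∀ t ≥ t₁, K + 1 ≤ (1 - θ) * g t) {t : ℝ} (ht : t₁ ≤ t) :
    log (g t) ≤ log (g t₁) + C / (h * (1 - θ)) := by
  have hdecay : ∀ s ≥ t₁, x s ≤ exp (-(1 - θ) * (s - t₁)) := fun s hs => by
    refine (le_mul_exp_of_hasDerivAt_le_mul (fun r hr => hsol.hasDerivAt_x (ht₁.trans hr))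
      (fun r hr => ?_) hs).trans (mul_le_of_le_one_left (exp_pos _).le (hx t₁ ht₁).2.le)
    obtain ⟨hx0, hx1⟩ := hx r (ht₁.trans hr)
    have hgap : payoffAdvantage a b c d (x r) - g r * (1 - x r) ≤ -1 := by
      nlinarith [hK (x r) ⟨hx0, hx1.le⟩, hbig r hr, hxθ r hr, (hg r (ht₁.trans hr)).le]
    have hx01 : 0 ≤ x r * (1 - x r) := mul_nonneg hx0 (sub_nonneg.2 hx1.le)
    nlinarith [mul_le_mul_of_nonneg_left hgap hx01, hxθ r hr]
  refine le_add_div_of_hasDerivAt_le_mul_exp hC (mul_pos hh (sub_pos.2 hθ))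
    (fun s hs => hsol.hasDerivAt_log_g (ht₁.trans hs) (hg s (ht₁.trans hs))) (fun s hs => ?_) ht
  obtain ⟨hx0, hx1⟩ := hx s (ht₁.trans hs)
  calc φ (x s) ≤ C * x s ^ h := hφ _ ⟨hx0, hx1.le⟩
    _ ≤ C * exp (-(1 - θ) * (s - t₁)) ^ h := by gcongr; exact hdecay s hs
    _ = C * exp (-(h * (1 - θ)) * (s - t₁)) := by rw [← exp_mul]; ring_nf

theorem exists_log_g_le (hsol : IsConformitySolution a b c d φ x g)
    (hx : ∀ t ≥ 0, x t ∈ Ico 0 1) (hg : ∀ t ≥ 0, 0 < g t) (hφ : ∀ y ∈ Icc 0 1, 0 ≤ φ y)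
    {K C h θ δ : ℝ} (hK : ∀ y ∈ Icc 0 1, payoffAdvantage a b c d y ≤ K) (hC : 0 ≤ C)
    (hh : 0 < h) (hφC : ∀ y ∈ Icc 0 1, φ y ≤ C * y ^ h) (hθ : θ ∈ Ioo 0 1) (hδ : 0 < δ)
    (hζ : ∀ y ∈ Icc θ 1, δ ≤ φ y - y * payoffAdvantage a b c d y) :
    ∃ B, ∀ t ≥ 0, log (g t) ≤ B := by
  by_contra! hunb
  have hmono := hsol.monotoneOn_log_g hx hg hφ
  obtain ⟨T, hT0, hT⟩ := hunb (log (max ((K + 1) / (1 - θ)) 1))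
  have hbig : ∀ t ≥ T, K + 1 ≤ (1 - θ) * g t := fun t ht => by
    have hlog := hT.trans_le (hmono hT0 (hT0.trans ht) ht)
    rw [log_lt_log_iff (by positivity) (hg t (hT0.trans ht))] at hlog
    rw [← div_le_iff₀' (sub_pos.2 hθ.2)]
    exact (le_max_left _ _).trans hlog.le
  obtain ⟨t₁, ht₁T, hxt₁⟩ := frequently_atTop.1 (hsol.frequently_x_lt hx hg hK hθ.1 hδ hζ) T
  have ht₁ : 0 ≤ t₁ := hT0.trans ht₁T
  have hxθ : ∀ t ≥ t₁, x t ≤ θ := fun t ht => hsol.x_le_of_x_le hx hK hθ.1 ht₁ hxt₁.le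
    (fun s hs => by linarith [hbig s (ht₁T.trans hs)]) ht
  obtain ⟨t, ht0, ht⟩ := hunb (log (g t₁) + C / (h * (1 - θ)))
  have := hsol.log_g_le_of_forall_x_le hx hg hK hC hh hφC hθ.2 ht₁ hxθ
    (fun s hs => hbig s (ht₁T.trans hs)) (le_max_left t₁ t)
  have := hmono ht0 (ht0.trans (le_max_right t₁ t)) (le_max_right t₁ t)
  linarith

theorem uniformContinuousOn_x (hsol : IsConformitySolution a b c d φ x g)
    (hx : ∀ t ≥ 0, x t ∈ Ico 0 1) (hg : ∀ t ≥ 0, 0 < g t) {K M : ℝ}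
    (hK : ∀ y ∈ Icc 0 1, |payoffAdvantage a b c d y| ≤ K) (hM : ∀ t ≥ 0, g t ≤ M) :
    UniformContinuousOn x (Ici 0) := by
  refine ((convex_Ici 0).lipschitzOnWith_of_nnnorm_hasDerivWithin_le (C := (K + M).toNNReal)
    (fun t ht => (hsol.hasDerivAt_x ht).hasDerivWithinAt) fun t ht => ?_).uniformContinuousOn
  rw [← NNReal.coe_le_coe, coe_nnnorm, Real.coe_toNNReal', Real.norm_eq_abs]
  refine le_max_of_le_left ?_
  obtain ⟨hx0, hx1⟩ := hx t ht
  have hx01 : 0 ≤ x t * (1 - x t) := mul_nonneg hx0 (sub_nonneg.2 hx1.le)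
  have hgx : |g t * (1 - x t)| ≤ M := by
    rw [abs_of_nonneg (mul_nonneg (hg t ht).le (sub_nonneg.2 hx1.le))]
    nlinarith [hM t ht, (hg t ht).le]
  rw [abs_mul, abs_of_nonneg hx01]
  calc x t * (1 - x t) * |payoffAdvantage a b c d (x t) - g t * (1 - x t)|
      ≤ 1 * |payoffAdvantage a b c d (x t) - g t * (1 - x t)| := by
        gcongr
        nlinarith
    _ ≤ K + M := by
        rw [one_mul]
        exact (abs_sub _ _).trans (add_le_add (hK _ ⟨hx0, hx1.le⟩) hgx)

end IsConformitySolution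

theorem consensus_stabilization_dominant_general (a b c d : ℝ)
    (φ : ℝ → ℝ) (hφ : ContDiff ℝ 1 φ)
    (h1 : ∀ y : ℝ, 0 < y → y ≤ 1 → 0 < φ y)
    (h2 : ∃ h k : ℝ, 0 < h ∧ 0 < k ∧
      Filter.Tendsto (fun y : ℝ => φ y / y ^ h) (nhdsWithin 0 (Set.Ioi 0)) (nhds k))
    (h3 : ∃ ε : ℝ, 0 < ε ∧ ∀ y : ℝ, 1 - ε ≤ y → y ≤ 1 → a - c < φ y)
    (x g : ℝ → ℝ) (hsol : IsConformitySolution a b c d φ x g)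
    (hx0 : x 0 ∈ Set.Ico (0 : ℝ) 1) (hg0 : 0 < g 0) :
    Filter.Tendsto x Filter.atTop (nhds 0) ∧
    ∃ gbar : ℝ, 0 < gbar ∧ Filter.Tendsto g Filter.atTop (nhds gbar) := by
  obtain ⟨h, k, hh, -, hlim⟩ := h2
  have hφc : Continuous φ := hφ.continuous
  have hφ0 : φ 0 = 0 := eq_zero_of_tendsto_div_rpow hφc.continuousWithinAt hh hlim
  have hφnn : ∀ y ∈ Icc 0 1, 0 ≤ φ y := fun y hy =>
    hy.1.eq_or_lt.elim (fun hy0 => hy0 ▸ hφ0.ge) fun hy0 => (h1 y hy0 hy.2).le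
  obtain ⟨C, hC, hφC⟩ := exists_le_mul_rpow_of_tendsto_div_rpow hφc.continuousOn hφ0 hlim
  obtain ⟨ε, hε, hφε⟩ := h3
  have hφ1 : a - c < φ 1 := hφε 1 (by linarith) le_rfl
  obtain ⟨θ, hθ, hζ⟩ := exists_mem_Ioo_forall_Icc_lt_of_continuousAt
    (f := fun y => φ y - y * payoffAdvantage a b c d y)
    (by unfold payoffAdvantage; fun_prop) zero_lt_one (r := (φ 1 - (a - c)) / 2)
    (by rw [one_mul, payoffAdvantage_one]; linarith)
  have hK := abs_payoffAdvantage_le a b c d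
  have hx : ∀ t ≥ 0, x t ∈ Ico 0 1 := fun t ht => hsol.mem_Ico hx0 ht
  have hg : ∀ t ≥ 0, 0 < g t := fun t ht => hsol.g_pos hφc hg0 ht
  obtain ⟨B, hB⟩ := hsol.exists_log_g_le hx hg hφnn (fun y hy => (le_abs_self _).trans (hK y hy))
    hC hh hφC hθ (by linarith) fun y hy => (hζ y hy).le
  obtain ⟨l, hl⟩ := (hsol.monotoneOn_log_g hx hg hφnn).exists_tendsto_of_le hB
  refine ⟨tendsto_nhds_zero_of_tendsto_primitive hφc.continuousOn (fun y hy => h1 y hy.1 hy.2)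
    (fun t ht => Ico_subset_Icc_self (hx t ht))
    (hsol.uniformContinuousOn_x hx hg hK fun t ht => (log_le_iff_le_exp (hg t ht)).1 (hB t ht))
    (fun t ht => hsol.hasDerivAt_log_g ht (hg t ht)) hl, exp l, exp_pos l, hl.rexp.congr' ?_⟩
  filter_upwards [eventually_ge_atTop 0] with t ht
  exact exp_log (hg t ht)

/-- Consensus stabilization via the conformity-gain controller in a dominant-strategy
game with action 1 dominant (`a > c`, `b > d`). -/
theorem consensus_stabilization_dominant (a b c d : ℝ) (hac : a > c) (hbd : b > d)
    (φ : ℝ → ℝ) (hφ : ContDiff ℝ 1 φ)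
    (h1 : ∀ y : ℝ, 0 < y → y ≤ 1 → 0 < φ y)
    (h2 : ∃ h k : ℝ, 0 < h ∧ 0 < k ∧
      Filter.Tendsto (fun y : ℝ => φ y / y ^ h) (nhdsWithin 0 (Set.Ioi 0)) (nhds k))
    (h3 : ∃ ε : ℝ, 0 < ε ∧ ∀ y : ℝ, 1 - ε ≤ y → y ≤ 1 → a - c < φ y)
    (x g : ℝ → ℝ) (hsol : IsConformitySolution a b c d φ x g)
    (hx0 : x 0 ∈ Set.Ico (0 : ℝ) 1) (hg0 : 0 < g 0) :
    Filter.Tendsto x Filter.atTop (nhds 0) ∧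
    ∃ gbar : ℝ, 0 < gbar ∧ Filter.Tendsto g Filter.atTop (nhds gbar) :=
  consensus_stabilization_dominant_general a b c d φ hφ h1 h2 h3 x g hsol hx0 hg0
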